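/- Let ρ = Σ_i λ_i |ψ_i⟩⟨ψ_i| with λ_i ≥ 0 (vectors ψ_i unit but not necessarily orthogonal), and let φ be a unit vector with ‖ρ - |φ⟩⟨φ|‖_1 ≤ dδ. Then, assuming dδ < 1/2, there exists i₀ with |⟨φ|ψ_{i₀}⟩|² ≥ 1 - 2dδ, i.e. D(φ, ψ_{i₀}) ≤ √(2dδ). -/

import Mathlib

/-!
Write `A = Σᵢ λᵢ |ψᵢ⟩⟨ψᵢ| - |φ⟩⟨φ|` and `t = dδ`. As `A` is Hermitian, `AᴴA = A²` and
`‖A‖₁ = Σₖ |μₖ|` over its eigenvalues; the spectral decomposition `A = Σₖ μₖ |bₖ⟩⟨bₖ|` then bounds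
both `tr A` and `⟨x|A|x⟩` (for unit `x`) in absolute value by `‖A‖₁ ≤ t`. The trace gives
`Σᵢ λᵢ ≤ 1 + t`, the quadratic form at `φ` gives `Σᵢ λᵢ |⟨φ|ψᵢ⟩|² ≥ 1 - t`, so the largest overlap
satisfies `|⟨φ|ψ_{i₀}⟩|² ≥ (1 - t) / (1 + t) ≥ 1 - 2t`.
-/

/-- The rank-one projection `|φ⟩⟨φ|` as a matrix: entries `φ i * conj (φ j)`. -/
noncomputable def proj {d : ℕ} (φ : EuclideanSpace ℂ (Fin d)) : Matrix (Fin d) (Fin d) ℂ :=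
  Matrix.vecMulVec (fun i => φ i) (fun j => star (φ j))

/-- The trace norm (sum of singular values, i.e. square roots of the eigenvalues of `AᴴA`). -/
noncomputable def traceNorm {d : ℕ} (A : Matrix (Fin d) (Fin d) ℂ) : ℝ :=
  ∑ i, Real.sqrt ((Matrix.isHermitian_conjTranspose_mul_self A).eigenvalues i)

/-- The operator (`∞`-)norm of a matrix acting on `ℓ²`. -/
noncomputable def opNorm {d : ℕ} (A : Matrix (Fin d) (Fin d) ℂ) : ℝ :=
  ‖Matrix.toEuclideanCLM (𝕜 := ℂ) A‖

open Matrix Polynomial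

namespace Matrix.IsHermitian

variable {𝕜 n : Type*} [RCLike 𝕜] [Fintype n] [DecidableEq n]

lemma sum_comp_eigenvalues_of_charpoly_eq {B : Matrix n n 𝕜} (hB : B.IsHermitian) {f : n → ℝ}
    (h : B.charpoly = ∏ i, (X - C (f i : 𝕜))) (g : ℝ → ℝ) :
    ∑ i, g (hB.eigenvalues i) = ∑ i, g (f i) := by
  have hroots : Multiset.map (RCLike.ofReal ∘ hB.eigenvalues) Finset.univ.val
      = Multiset.map (fun i => (f i : 𝕜)) Finset.univ.val := by
    rw [← hB.roots_charpoly_eq_eigenvalues, h, roots_prod _ _ (by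
      simp [Finset.prod_ne_zero_iff, X_sub_C_ne_zero])]
    simp
  simpa [Multiset.map_map, Function.comp_def] using
    congrArg (fun s : Multiset 𝕜 => (s.map (g ∘ RCLike.re)).sum) hroots

lemma sum_sqrt_eigenvalues_conjTranspose_mul_self {A : Matrix n n 𝕜} (hA : A.IsHermitian) :
    ∑ i, √((isHermitian_conjTranspose_mul_self A).eigenvalues i) = ∑ i, |hA.eigenvalues i| := by
  have hsq : Aᴴ * A = cfc (· ^ 2 : ℝ → ℝ) A := by
    rw [cfc_pow_id A 2 hA.isSelfAdjoint, hA.eq, sq]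
  rw [sum_comp_eigenvalues_of_charpoly_eq _ (hsq ▸ hA.charpoly_cfc_eq _)]
  simp [Real.sqrt_sq_eq_abs]

end Matrix.IsHermitian

section Proj

variable {d : ℕ}

lemma isHermitian_proj (φ : EuclideanSpace ℂ (Fin d)) : (proj φ).IsHermitian := by
  ext i j
  simp [proj, vecMulVec_apply, mul_comm]

lemma trace_proj (φ : EuclideanSpace ℂ (Fin d)) : (proj φ).trace = (‖φ‖ : ℂ) ^ 2 := by
  have h := inner_self_eq_norm_sq_to_K (𝕜 := ℂ) φ
  rw [EuclideanSpace.inner_eq_star_dotProduct] at h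
  simp only [RCLike.ofReal_eq_complex_ofReal] at h
  rw [← h]
  exact trace_vecMulVec _ _

lemma proj_mulVec (ψ x : EuclideanSpace ℂ (Fin d)) :
    proj ψ *ᵥ x.ofLp = (inner ℂ ψ x : ℂ) • ψ.ofLp := by
  rw [proj, vecMulVec_mulVec, EuclideanSpace.inner_eq_star_dotProduct]
  ext i
  simp [dotProduct_comm, mul_comm, Pi.star_def]

lemma star_dotProduct_proj_mulVec (ψ x : EuclideanSpace ℂ (Fin d)) :
    star x.ofLp ⬝ᵥ (proj ψ *ᵥ x.ofLp) = ((‖(inner ℂ x ψ : ℂ)‖ ^ 2 : ℝ) : ℂ) := by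
  rw [proj_mulVec, dotProduct_smul, dotProduct_comm, ← EuclideanSpace.inner_eq_star_dotProduct,
    ← inner_conj_symm, smul_eq_mul, Complex.conj_mul', Complex.ofReal_pow]

lemma star_dotProduct_sum_smul_proj_mulVec {ι : Type*} [Fintype ι] (c : ι → ℝ)
    (v : ι → EuclideanSpace ℂ (Fin d)) (x : EuclideanSpace ℂ (Fin d)) :
    star x.ofLp ⬝ᵥ ((∑ i, (c i : ℂ) • proj (v i)) *ᵥ x.ofLp)
      = ((∑ i, c i * ‖(inner ℂ x (v i) : ℂ)‖ ^ 2 : ℝ) : ℂ) := by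
  simp [sum_mulVec, dotProduct_sum, smul_mulVec, star_dotProduct_proj_mulVec]

lemma isHermitian_sum_smul_proj_sub_proj {ι : Type*} [Fintype ι] (c : ι → ℝ)
    (v : ι → EuclideanSpace ℂ (Fin d)) (φ : EuclideanSpace ℂ (Fin d)) :
    (∑ i, (c i : ℂ) • proj (v i) - proj φ).IsHermitian :=
  IsHermitian.sub
    (isSelfAdjoint_sum _ fun i _ => (isHermitian_proj (v i)).smul (Complex.conj_ofReal (c i)))
    (isHermitian_proj φ)

end Proj

lemma traceNorm_nonneg {d : ℕ} (A : Matrix (Fin d) (Fin d) ℂ) : 0 ≤ traceNorm A :=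
  Finset.sum_nonneg fun _ _ => Real.sqrt_nonneg _

namespace Matrix.IsHermitian

variable {d : ℕ} {A : Matrix (Fin d) (Fin d) ℂ} (hA : A.IsHermitian)
include hA

lemma traceNorm_eq_sum_abs_eigenvalues : traceNorm A = ∑ i, |hA.eigenvalues i| :=
  hA.sum_sqrt_eigenvalues_conjTranspose_mul_self

lemma re_trace_le_traceNorm : A.trace.re ≤ traceNorm A := by
  rw [hA.trace_eq_sum_eigenvalues, hA.traceNorm_eq_sum_abs_eigenvalues]
  simpa using Finset.sum_le_sum fun i _ => le_abs_self (hA.eigenvalues i)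

lemma eq_sum_eigenvalues_smul_proj :
    A = ∑ i, (hA.eigenvalues i : ℂ) • proj (hA.eigenvectorBasis i) := by
  conv_lhs => rw [hA.spectral_theorem, Unitary.conjStarAlgAut_apply]
  ext i j
  simp only [mul_apply, diagonal_apply, eigenvectorUnitary_apply, proj, sum_apply, smul_apply,
    vecMulVec_apply, Function.comp_apply, mul_ite, mul_zero, Finset.sum_ite_eq', Finset.mem_univ,
    ↓reduceIte, star_apply, RCLike.star_def, Complex.coe_algebraMap, Complex.coe_smul,
    Complex.real_smul]
  exact Finset.sum_congr rfl fun _ _ => by ring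

lemma neg_traceNorm_mul_le_re_star_dotProduct_mulVec (x : EuclideanSpace ℂ (Fin d)) :
    -(traceNorm A * ‖x‖ ^ 2) ≤ (star x.ofLp ⬝ᵥ (A *ᵥ x.ofLp)).re := by
  conv_rhs => rw [hA.eq_sum_eigenvalues_smul_proj]
  rw [star_dotProduct_sum_smul_proj_mulVec, Complex.ofReal_re,
    hA.traceNorm_eq_sum_abs_eigenvalues, Finset.sum_mul, ← Finset.sum_neg_distrib]
  refine Finset.sum_le_sum fun i _ => ?_
  have hwx : ‖(inner ℂ x (hA.eigenvectorBasis i) : ℂ)‖ ^ 2 ≤ ‖x‖ ^ 2 := by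
    gcongr
    simpa using norm_inner_le_norm (𝕜 := ℂ) x (hA.eigenvectorBasis i)
  set w := ‖(inner ℂ x (hA.eigenvectorBasis i) : ℂ)‖ ^ 2
  have hw : 0 ≤ w := sq_nonneg _
  calc -(|hA.eigenvalues i| * ‖x‖ ^ 2) ≤ -(|hA.eigenvalues i| * w) := by gcongr
    _ = -|hA.eigenvalues i * w| := by rw [abs_mul, abs_of_nonneg hw]
    _ ≤ hA.eigenvalues i * w := neg_abs_le _

end Matrix.IsHermitian

lemma exists_one_sub_two_mul_le_of_sum_le_of_le_sum_mul {ι : Type*} [Fintype ι] {lam w : ι → ℝ}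
    {t : ℝ} (hlam : ∀ i, 0 ≤ lam i) (hw : ∀ i, 0 ≤ w i) (ht : 0 ≤ t) (ht1 : t < 1)
    (hsum : ∑ i, lam i ≤ 1 + t) (hmix : 1 - t ≤ ∑ i, lam i * w i) :
    ∃ i, 1 - 2 * t ≤ w i := by
  have hne : (Finset.univ : Finset ι).Nonempty := by
    by_contra h
    simp only [Finset.not_nonempty_iff_eq_empty.mp h, Finset.sum_empty] at hmix
    linarith
  obtain ⟨i, -, hi⟩ := Finset.exists_max_image Finset.univ w hne
  refine ⟨i, ?_⟩
  have hmax : ∑ j, lam j * w j ≤ w i * (1 + t) := calc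
    ∑ j, lam j * w j ≤ ∑ j, lam j * w i :=
      Finset.sum_le_sum fun j hj => mul_le_mul_of_nonneg_left (hi j hj) (hlam j)
    _ = w i * ∑ j, lam j := by rw [← Finset.sum_mul, mul_comm]
    _ ≤ w i * (1 + t) := mul_le_mul_of_nonneg_left hsum (hw i)
  -- `(1 - 2t)(1 + t) = 1 - t - 2t² ≤ 1 - t ≤ wᵢ (1 + t)`
  nlinarith

theorem stmt18_general {dim I : ℕ} (d : ℕ) {δ : ℝ} (hdδ : (d : ℝ) * δ < 1 / 2)
    (lam : Fin I → ℝ) (h0 : ∀ i, 0 ≤ lam i)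
    (ψ : Fin I → EuclideanSpace ℂ (Fin dim)) (hψ : ∀ i, ‖ψ i‖ = 1)
    (φ : EuclideanSpace ℂ (Fin dim)) (hφ : ‖φ‖ = 1)
    (h : traceNorm (∑ i, (lam i : ℂ) • proj (ψ i) - proj φ) ≤ (d : ℝ) * δ) :
    ∃ i₀, 1 - 2 * d * δ ≤ ‖(inner ℂ φ (ψ i₀) : ℂ)‖ ^ 2 ∧
      Real.sqrt (1 - ‖(inner ℂ φ (ψ i₀) : ℂ)‖ ^ 2) ≤ Real.sqrt (2 * d * δ) := by
  set A := ∑ i, (lam i : ℂ) • proj (ψ i) - proj φ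
  have hA : A.IsHermitian := isHermitian_sum_smul_proj_sub_proj lam ψ φ
  have htrace : A.trace.re = ∑ i, lam i - 1 := by
    simp [A, trace_sub, trace_sum, trace_smul, trace_proj, hψ, hφ]
  have hquad : (star φ.ofLp ⬝ᵥ (A *ᵥ φ.ofLp)).re
      = ∑ i, lam i * ‖(inner ℂ φ (ψ i) : ℂ)‖ ^ 2 - 1 := by
    rw [sub_mulVec, dotProduct_sub, star_dotProduct_sum_smul_proj_mulVec,
      star_dotProduct_proj_mulVec, inner_self_eq_norm_sq_to_K, hφ, ← Complex.ofReal_sub,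
      Complex.ofReal_re]
    norm_num
  have hsum : ∑ i, lam i ≤ 1 + d * δ := by
    linarith [hA.re_trace_le_traceNorm]
  have hmix : 1 - d * δ ≤ ∑ i, lam i * ‖(inner ℂ φ (ψ i) : ℂ)‖ ^ 2 := by
    have := hA.neg_traceNorm_mul_le_re_star_dotProduct_mulVec φ
    rw [hφ, one_pow, mul_one] at this
    linarith
  obtain ⟨i₀, hi₀⟩ := exists_one_sub_two_mul_le_of_sum_le_of_le_sum_mul h0
    (fun i => sq_nonneg ‖(inner ℂ φ (ψ i) : ℂ)‖) ((traceNorm_nonneg _).trans h) (by linarith)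
    hsum hmix
  exact ⟨i₀, by linarith, Real.sqrt_le_sqrt (by linarith)⟩

/-- If `ρ = Σᵢ λᵢ|ψᵢ⟩⟨ψᵢ|` with `λᵢ ≥ 0`, `φ` is a unit vector with
`‖ρ - |φ⟩⟨φ|‖₁ ≤ dδ` and `dδ < 1/2`, then some `i₀` satisfies
`|⟨φ|ψ_{i₀}⟩|² ≥ 1 - 2dδ`, i.e. `D(φ, ψ_{i₀}) ≤ √(2dδ)`. -/
theorem stmt18 {dim I : ℕ} (d : ℕ) {δ : ℝ} (hδ : 0 ≤ δ) (hdδ : (d : ℝ) * δ < 1 / 2)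
    (lam : Fin I → ℝ) (h0 : ∀ i, 0 ≤ lam i)
    (ψ : Fin I → EuclideanSpace ℂ (Fin dim)) (hψ : ∀ i, ‖ψ i‖ = 1)
    (φ : EuclideanSpace ℂ (Fin dim)) (hφ : ‖φ‖ = 1)
    (h : traceNorm (∑ i, (lam i : ℂ) • proj (ψ i) - proj φ) ≤ (d : ℝ) * δ) :
    ∃ i₀, 1 - 2 * d * δ ≤ ‖(inner ℂ φ (ψ i₀) : ℂ)‖ ^ 2 ∧
      Real.sqrt (1 - ‖(inner ℂ φ (ψ i₀) : ℂ)‖ ^ 2) ≤ Real.sqrt (2 * d * δ) :=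
  stmt18_general d hdδ lam h0 ψ hψ φ hφ h
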